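/- For every M, every m, and every permutation s of Fin m, the element ∑_{i : Fin m → Fin (2M)} ι(X (i 0) (i (s 0))) · ι(X (i 1) (i (s 1))) ⋯ ι(X (i (m−1)) (i (s (m−1)))) belongs to the center of the universal enveloping algebra U(𝔰𝔭(2M)). -/

import Mathlib

/-! For `Y ∈ 𝔰𝔭(2M)` the generators transform like `E a b` under `ad Y`:
`⁅Y, X a b⁆ = ∑ c, (Y c a • X c b - Y b c • X a c)`. Indeed `X a b = E a b + K (E a b)ᵀ K`, and
`A ↦ A + K Aᵀ K` commutes with `ad Y` because `K² = -1` and `Yᵀ K = -K Y`.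

Since `ad (ι Y)` is a derivation, its value on a word `∏ₖ ι (X (i k) (j k))` is a sum of words in
which a single index `i k` or `j k` is moved by `Y`. In `w(s)` we have `j = i ∘ s`, and the
substitution `(i, c) ↦ (update i k c, i k)` matches the terms moving `i k` with those moving
`j (s⁻¹ k)`, so they cancel. Hence `ι Y` commutes with `w(s)`, and the `ι Y` generate `U(𝔰𝔭(2M))`.
-/

open Matrix in
noncomputable section
open Matrix

attribute [local instance 100] LieRing.ofAssociativeRing

/-- The sign ε. -/
def spEps (M : ℕ) (i : Fin (2 * M)) : ℂ := if (i : ℕ) < M then 1 else -1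

lemma spEps_rev (M : ℕ) (i : Fin (2 * M)) : spEps M (Fin.rev i) = -spEps M i := by
  have := i.isLt
  have h : (Fin.rev i : ℕ) = 2 * M - (i + 1) := Fin.val_rev i
  simp only [spEps, h]
  split_ifs <;> first | omega | norm_num

lemma spEps_sq (M : ℕ) (i : Fin (2 * M)) : spEps M i * spEps M i = 1 := by
  simp only [spEps]; split_ifs <;> norm_num

/-- The matrix K defining the symplectic form. -/
def spK (M : ℕ) : Matrix (Fin (2 * M)) (Fin (2 * M)) ℂ :=
  fun i j => if j = Fin.rev i then spEps M i else 0

lemma spK_mul (M : ℕ) (A : Matrix (Fin (2 * M)) (Fin (2 * M)) ℂ) (i j : Fin (2 * M)) :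
    (spK M * A) i j = spEps M i * A (Fin.rev i) j := by
  simp [spK, Matrix.mul_apply, Fin.rev_eq_iff]

lemma mul_spK (M : ℕ) (A : Matrix (Fin (2 * M)) (Fin (2 * M)) ℂ) (i j : Fin (2 * M)) :
    (A * spK M) i j = A i (Fin.rev j) * spEps M (Fin.rev j) := by
  classical
  simp only [Matrix.mul_apply, spK]
  rw [Finset.sum_eq_single (Fin.rev j)]
  · simp [Fin.rev_rev]
  · intro b _ hb
    rw [if_neg, mul_zero]
    intro h
    exact hb (by rw [h, Fin.rev_rev])
  · simp

/-- The Lie algebra 𝔰𝔭(2M). -/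
def spL (M : ℕ) : LieSubalgebra ℂ (Matrix (Fin (2 * M)) (Fin (2 * M)) ℂ) where
  carrier := {A | Aᵀ * spK M = -(spK M * A)}
  add_mem' := by
    intro A B hA hB
    simp only [Set.mem_setOf_eq] at *
    rw [Matrix.transpose_add, Matrix.add_mul, hA, hB, Matrix.mul_add, neg_add]
  zero_mem' := by
    simp [Set.mem_setOf_eq]
  smul_mem' := by
    intro c A hA
    simp only [Set.mem_setOf_eq] at *
    rw [Matrix.transpose_smul, Matrix.smul_mul, hA, Matrix.mul_smul, smul_neg]
  lie_mem' := by
    intro A B hA hB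
    simp only [Set.mem_setOf_eq] at *
    rw [Ring.lie_def, Matrix.transpose_sub, Matrix.transpose_mul, Matrix.transpose_mul,
      Matrix.sub_mul, Matrix.mul_assoc, Matrix.mul_assoc, hA, hB, Matrix.mul_neg,
      Matrix.mul_neg, ← Matrix.mul_assoc, ← Matrix.mul_assoc, hA, hB, Matrix.neg_mul,
      Matrix.neg_mul, neg_neg, neg_neg, Matrix.mul_sub, Matrix.mul_assoc, Matrix.mul_assoc]
    abel

/-- The generators X_{ab} of 𝔰𝔭(2M), as matrices. -/
def spXmat (M : ℕ) (a b : Fin (2 * M)) : Matrix (Fin (2 * M)) (Fin (2 * M)) ℂ :=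
  Matrix.single a b 1 -
    spEps M a • spEps M b • Matrix.single (Fin.rev b) (Fin.rev a) 1

lemma spXmat_mem (M : ℕ) (a b : Fin (2 * M)) : spXmat M a b ∈ spL M := by
  change (spXmat M a b)ᵀ * spK M = -(spK M * spXmat M a b)
  ext i j
  rw [mul_spK, Matrix.neg_apply, spK_mul]
  simp only [spXmat, Matrix.sub_apply, Matrix.transpose_apply, Matrix.smul_apply,
    Matrix.single, Matrix.of_apply, smul_eq_mul]
  simp only [Fin.rev_inj, Fin.rev_eq_iff, Fin.rev_rev]
  by_cases hP : a = Fin.rev j ∧ b = i <;> by_cases hQ : a = Fin.rev i ∧ b = j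
  · obtain ⟨ha, hb⟩ := hP
    subst ha; subst hb
    obtain ⟨-, hij⟩ := hQ
    subst hij
    simp only [and_self, if_true, if_pos rfl]
    rw [spEps_rev]
    ring
  · obtain ⟨ha, hb⟩ := hP
    subst ha; subst hb
    simp only [and_comm] at hQ
    simp only [and_self, if_true, if_pos rfl, hQ, if_false, if_neg hQ]
    rw [if_neg (fun h => hQ ⟨h.2, h.1⟩), spEps_rev]
    linear_combination (spEps M j) * spEps_sq M b
  · obtain ⟨ha, hb⟩ := hQ
    subst ha; subst hb
    simp only [and_comm] at hP
    simp only [and_self, if_true, if_pos rfl, hP, if_false, if_neg hP]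
    rw [if_neg (fun h => hP ⟨h.2, h.1⟩), spEps_rev, spEps_rev]
    linear_combination (-spEps M i) * spEps_sq M b
  · simp only [if_neg hP, if_neg hQ,
      if_neg (fun h : b = i ∧ a = Fin.rev j => hP ⟨h.2, h.1⟩),
      if_neg (fun h : b = j ∧ a = Fin.rev i => hQ ⟨h.2, h.1⟩)]
    ring

/-- The generators of 𝔰𝔭(2M) as elements of the Lie algebra. -/
def spX (M : ℕ) (a b : Fin (2 * M)) : spL M := ⟨spXmat M a b, spXmat_mem M a b⟩

/-- The extension of the 𝔰𝔭(2M) weight system to permutations. -/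
def wsp (M : ℕ) {m : ℕ} (s : Equiv.Perm (Fin m)) :
    UniversalEnvelopingAlgebra ℂ ↥(spL M) :=
  ∑ i : Fin m → Fin (2 * M),
    (List.ofFn fun k : Fin m =>
      UniversalEnvelopingAlgebra.ι ℂ (spX M (i k) (i (s k)))).prod

section LieAction

open Function

variable {R A n : Type*} [CommRing R] [Ring A] [Algebra R A] [Fintype n]

theorem commutator_prod_ofFn (u : A) {m : ℕ} (f : Fin m → A) :
    u * (List.ofFn f).prod - (List.ofFn f).prod * u =
      ∑ k, (List.ofFn (update f k (u * f k - f k * u))).prod := by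
  induction m with
  | zero => simp
  | succ m ih =>
    have hsucc : ∀ (k : Fin m) x, (List.ofFn (update f k.succ x)).prod =
        f 0 * (List.ofFn (update (fun i => f i.succ) k x)).prod := by
      intro k x
      rw [List.ofFn_succ, List.prod_cons, update_of_ne (Fin.succ_ne_zero k).symm,
        update_comp_eq_of_injective' f (Fin.succ_injective m)]
    rw [Fin.sum_univ_succ]
    simp only [hsucc, ← Finset.mul_sum, ← ih]
    rw [List.ofFn_succ, List.prod_cons, List.ofFn_succ, List.prod_cons, update_self]
    simp only [update_of_ne (Fin.succ_ne_zero _)]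
    noncomm_ring

def indexedProd (x : n → n → A) {m : ℕ} (a b : Fin m → n) : A :=
  (List.ofFn fun k => x (a k) (b k)).prod

theorem commutator_indexedProd {u : A} {x : n → n → A} {y : Matrix n n R}
    (hx : ∀ a b, u * x a b - x a b * u = ∑ c, (y c a • x c b - y b c • x a c))
    {m : ℕ} (a b : Fin m → n) :
    u * indexedProd x a b - indexedProd x a b * u =
      ∑ k, ∑ c, (y c (a k) • indexedProd x (update a k c) b -
        y (b k) c • indexedProd x a (update b k c)) := by
  let P := MultilinearMap.mkPiAlgebraFin R m A
  have hP : ∀ f, (List.ofFn f).prod = P f := fun f => (MultilinearMap.mkPiAlgebraFin_apply f).symm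
  simp only [indexedProd]
  rw [commutator_prod_ofFn]
  simp only [hx, hP, P.map_update_sum, P.map_update_sub, P.map_update_smul]
  congr! 5 with k _ c _ <;> ext j
  · exact (apply_update (fun j c => x c (b j)) a k c j).symm
  · exact (apply_update (fun j c => x (a j) c) b k c j).symm

theorem Fintype.sum_sum_update {ι M : Type*} [Fintype ι] [DecidableEq ι] [AddCommMonoid M]
    (k : ι) (F : (ι → n) → n → M) :
    ∑ i, ∑ c, F (update i k c) (i k) = ∑ i, ∑ c, F i c := by
  have hτ : Involutive fun p : (ι → n) × n => (update p.1 k p.2, p.1 k) := by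
    intro p; simp
  simp only [← Fintype.sum_prod_type']
  exact Fintype.sum_equiv hτ.toPerm _ _ fun _ => rfl

def permContraction (x : n → n → A) {m : ℕ} (s : Equiv.Perm (Fin m)) : A :=
  ∑ i : Fin m → n, indexedProd x i fun k => i (s k)

theorem commute_permContraction {u : A} {x : n → n → A} {y : Matrix n n R}
    (hx : ∀ a b, u * x a b - x a b * u = ∑ c, (y c a • x c b - y b c • x a c))
    {m : ℕ} (s : Equiv.Perm (Fin m)) : Commute u (permContraction x s) := by
  rw [commute_iff_eq, ← sub_eq_zero, permContraction, Finset.mul_sum, Finset.sum_mul,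
    ← Finset.sum_sub_distrib]
  simp only [commutator_indexedProd hx, Finset.sum_sub_distrib]
  rw [sub_eq_zero, Finset.sum_comm, Finset.sum_comm (s := Finset.univ (α := Fin m → n))]
  conv_rhs => rw [← Equiv.sum_comp s.symm]
  refine Finset.sum_congr rfl fun k _ => ?_
  rw [← Fintype.sum_sum_update k]
  simp only [update_self, update_idem, update_eq_self, update_apply_equiv_apply,
    Equiv.apply_symm_apply]
  rfl

end LieAction

namespace Matrix

variable {R n : Type*} [CommRing R] [Fintype n] [DecidableEq n]

theorem lie_single (Y : Matrix n n R) (a b : n) :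
    ⁅Y, single a b (1 : R)⁆ = ∑ c, (Y c a • single c b 1 - Y b c • single a c 1) := by
  ext i j
  simp [Ring.lie_def, Matrix.mul_apply, Matrix.sum_apply, Matrix.single_apply, ite_and]

def spProj (K : Matrix n n R) : Matrix n n R →ₗ[R] Matrix n n R where
  toFun A := A + K * Aᵀ * K
  map_add' A B := by simp only [transpose_add, Matrix.mul_add, Matrix.add_mul]; abel
  map_smul' c A := by simp [transpose_smul, smul_add]

theorem spProj_apply (K A : Matrix n n R) : spProj K A = A + K * Aᵀ * K := rfl

theorem spProj_lie {K Y : Matrix n n R} (hK : K * K = -1) (hY : Yᵀ * K = -(K * Y))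
    (A : Matrix n n R) : spProj K ⁅Y, A⁆ = ⁅Y, spProj K A⁆ := by
  have hY' : K * Yᵀ = -(Y * K) := by
    calc K * Yᵀ = -(K * (Yᵀ * K) * K) := by
          rw [Matrix.mul_assoc, Matrix.mul_assoc, hK]; simp
      _ = -(Y * K) := by
          rw [hY, Matrix.mul_neg, ← Matrix.mul_assoc, hK]; simp
  have h₁ : K * (Aᵀ * Yᵀ) * K = -(K * Aᵀ * K * Y) := by
    simp only [Matrix.mul_assoc, hY, Matrix.mul_neg]
  have h₂ : K * (Yᵀ * Aᵀ) * K = -(Y * (K * Aᵀ * K)) := by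
    rw [← Matrix.mul_assoc K, hY']; simp only [Matrix.neg_mul, Matrix.mul_assoc]
  simp only [spProj_apply, Ring.lie_def, transpose_sub, transpose_mul, Matrix.mul_sub,
    Matrix.sub_mul, h₁, h₂]
  noncomm_ring

end Matrix

open Matrix

theorem spK_mul_self (M : ℕ) : spK M * spK M = -1 := by
  ext i j
  rw [spK_mul, Matrix.neg_apply, Matrix.one_apply]
  simp only [spK, Fin.rev_rev, spEps_rev, @eq_comm _ j i]
  split_ifs <;> simp [spEps_sq]

theorem spXmat_eq_spProj (M : ℕ) (a b : Fin (2 * M)) :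
    spXmat M a b = spProj (spK M) (single a b 1) := by
  ext i j
  rw [spProj_apply, Matrix.add_apply, mul_spK, spK_mul, transpose_apply, spXmat, Matrix.sub_apply,
    Matrix.smul_apply, Matrix.smul_apply]
  simp only [single_apply, Fin.rev_eq_iff, smul_eq_mul]
  by_cases h : a = j.rev ∧ b = i.rev
  · obtain ⟨rfl, rfl⟩ := h
    simp only [spEps_rev, and_self, if_true]
    split_ifs <;> ring
  · rw [if_neg h, if_neg (mt And.symm h)]
    ring

theorem lie_spXmat (M : ℕ) {Y : Matrix (Fin (2 * M)) (Fin (2 * M)) ℂ} (hY : Y ∈ spL M)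
    (a b : Fin (2 * M)) :
    ⁅Y, spXmat M a b⁆ = ∑ c, (Y c a • spXmat M c b - Y b c • spXmat M a c) := by
  simp only [spXmat_eq_spProj, ← spProj_lie (spK_mul_self M) hY, lie_single, map_sum, map_sub,
    map_smul]

theorem lie_spX (M : ℕ) (Y : spL M) (a b : Fin (2 * M)) :
    ⁅Y, spX M a b⁆ = ∑ c, (Y.1 c a • spX M c b - Y.1 b c • spX M a c) :=
  Subtype.ext <| by push_cast; exact lie_spXmat M Y.2 a b

open UniversalEnvelopingAlgebra in
theorem ι_commutator_spX (M : ℕ) (Y : spL M) (a b : Fin (2 * M)) :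
    ι ℂ Y * ι ℂ (spX M a b) - ι ℂ (spX M a b) * ι ℂ Y =
      ∑ c, (Y.1 c a • ι ℂ (spX M c b) - Y.1 b c • ι ℂ (spX M a c)) := by
  rw [← Ring.lie_def, ← LieHom.map_lie, lie_spX, map_sum]
  simp only [map_sub, map_smul]

namespace UniversalEnvelopingAlgebra

variable {R L : Type*} [CommRing R] [LieRing L] [LieAlgebra R L]

theorem adjoin_range_ι :
    Algebra.adjoin R (Set.range (ι R : L → UniversalEnvelopingAlgebra R L)) = ⊤ := by
  have hι : (ι R : L → _) = mkAlgHom R L ∘ TensorAlgebra.ι R := rfl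
  rw [hι, Set.range_comp, ← AlgHom.map_adjoin, TensorAlgebra.adjoin_range_ι, Algebra.map_top,
    AlgHom.range_eq_top]
  exact RingCon.mkₐ_surjective _

theorem mem_center_of_commute_ι {z : UniversalEnvelopingAlgebra R L}
    (h : ∀ x, Commute (ι R x) z) :
    z ∈ Subalgebra.center R (UniversalEnvelopingAlgebra R L) := by
  refine Subalgebra.mem_center_iff.2 fun b => (Algebra.commute_of_mem_adjoin_of_forall_mem_commute
    (by simp [adjoin_range_ι] : b ∈ Algebra.adjoin R (Set.range (ι R))) ?_).eq.symm
  rintro _ ⟨x, rfl⟩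
  exact (h x).symm

end UniversalEnvelopingAlgebra

/-- w_{𝔰𝔭(2M)}(s) belongs to the center of the universal enveloping algebra. -/
theorem wsp_mem_center (M m : ℕ) (s : Equiv.Perm (Fin m)) :
    wsp M s ∈ Subalgebra.center ℂ (UniversalEnvelopingAlgebra ℂ ↥(spL M)) :=
  UniversalEnvelopingAlgebra.mem_center_of_commute_ι fun Y =>
    commute_permContraction (ι_commutator_spX M Y) s

end
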